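/- For fixed positive integers n and p, all zeros of the polynomial Q_n^p(z) := ∑_{k=0}^{⌊n/2⌋} (S(p,k)/2) C(n,2k) z^k are real and negative, where S(p,k) = C(2p,p)C(2k,k)/C(p+k,p). -/

import Mathlib

/-- The super Catalan number `S(p,k)` as a rational number. -/
def superCatalan (p k : ℕ) : ℚ :=
  (((2 * p).choose p : ℚ) * ((2 * k).choose k : ℚ)) / ((p + k).choose p : ℚ)

/-!
Put `m = ⌊n/2⌋`, `e = n mod 2`, `a = p + m` and `s = -a - 1/2 - e`. The `j`-th derivative of
`x ^ a * (1 + x) ^ s` is `x ^ (a - j) * (1 + x) ^ (s - j) * P_j(x)` for a polynomial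
`P_j = powDerivPoly a s j` of degree at most `j`. For `j < a` it tends to `0` at `0⁺`, and since `a + s < 0` it tends to `0`
at `∞`; so by Rolle's theorem every differentiation gains a zero in `(0, ∞)`, and `P_m` has `m`
distinct positive roots. Comparing coefficients, `P_m(x)` is a positive multiple of
`Q_n^p(-x/4)`, which has degree at most `m`; so its `m` negative roots are all its zeros.
-/

open Polynomial Filter Topology Set Asymptotics
open scoped Nat

section Rolle

variable {f f' : ℝ → ℝ} {u l : ℝ}

theorem exists_hasDerivAt_eq_zero_Ioi (hu : Tendsto f (𝓝[>] u) (𝓝 l))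
    (hinf : Tendsto f atTop (𝓝 l)) (hff' : ∀ x ∈ Ioi u, HasDerivAt f (f' x) x) :
    ∃ c ∈ Ioi u, f' c = 0 := by
  set ψ : ℝ → ℝ := fun t ↦ u - 1 + t⁻¹
  have hψ_mem : ∀ t ∈ Ioo (0 : ℝ) 1, ψ t ∈ Ioi u := fun t ht ↦ by
    have : 1 < t⁻¹ := one_lt_inv₀ ht.1 |>.mpr ht.2
    simp only [ψ, mem_Ioi]; linarith
  have hψ_zero : Tendsto ψ (𝓝[>] 0) atTop :=
    tendsto_atTop_add_const_left _ _ tendsto_inv_nhdsGT_zero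
  have hψ_one : Tendsto ψ (𝓝[<] 1) (𝓝[>] u) := by
    refine tendsto_nhdsWithin_iff.mpr ⟨?_, ?_⟩
    · have : ContinuousAt ψ 1 := by fun_prop (disch := norm_num)
      simpa [ψ] using this.tendsto.mono_left nhdsWithin_le_nhds
    · filter_upwards [Ioo_mem_nhdsLT (zero_lt_one' ℝ)] with t ht using hψ_mem t ht
  obtain ⟨c, hc, hc0⟩ := exists_hasDerivAt_eq_zero' zero_lt_one (hinf.comp hψ_zero)
    (hu.comp hψ_one) fun t ht ↦
      (hff' _ (hψ_mem t ht)).comp t ((hasDerivAt_inv ht.1.ne').const_add (u - 1))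
  refine ⟨ψ c, hψ_mem c hc, ?_⟩
  simpa [hc.1.ne'] using hc0

theorem exists_card_zeros_deriv_Ioi (hff' : ∀ x ∈ Ioi u, HasDerivAt f (f' x) x)
    (hu : Tendsto f (𝓝[>] u) (𝓝 0)) (hinf : Tendsto f atTop (𝓝 0)) {S : Finset ℝ}
    (hS : ∀ x ∈ S, u < x ∧ f x = 0) :
    ∃ T : Finset ℝ, T.card = S.card + 1 ∧ ∀ x ∈ T, u < x ∧ f' x = 0 := by
  induction S using Finset.induction_on_min generalizing u with
  | empty =>
    obtain ⟨c, hc, hc0⟩ := exists_hasDerivAt_eq_zero_Ioi hu hinf hff'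
    exact ⟨{c}, rfl, by simpa using ⟨hc, hc0⟩⟩
  | insert v S hvS ih =>
    obtain ⟨huv, hv0⟩ := hS v (Finset.mem_insert_self v S)
    have hv : Tendsto f (𝓝 v) (𝓝 0) := hv0 ▸ (hff' v huv).continuousAt.tendsto
    obtain ⟨c, hc, hc0⟩ := exists_hasDerivAt_eq_zero' huv hu (hv.mono_left nhdsWithin_le_nhds)
      fun x hx ↦ hff' x hx.1
    obtain ⟨T, hT, hTzero⟩ := ih (fun x hx ↦ hff' x (huv.trans hx))
      (hv.mono_left nhdsWithin_le_nhds)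
      fun x hx ↦ ⟨hvS x hx, (hS x (Finset.mem_insert_of_mem hx)).2⟩
    have hcT : c ∉ T := fun h ↦ (hTzero c h).1.not_gt hc.2
    have hvS' : v ∉ S := fun h ↦ (hvS v h).false
    refine ⟨insert c T, ?_, ?_⟩
    · rw [Finset.card_insert_of_notMem hcT, Finset.card_insert_of_notMem hvS', hT]
    · simp only [Finset.mem_insert, forall_eq_or_imp]
      exact ⟨⟨hc.1, hc0⟩, fun x hx ↦ ⟨huv.trans (hTzero x hx).1, (hTzero x hx).2⟩⟩

end Rolle

theorem Polynomial.mem_of_isRoot_of_natDegree_le_card {R : Type*} [CommRing R] [IsDomain R]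
    [DecidableEq R] {p : R[X]} (hp : p ≠ 0) {S : Finset R} (hS : ∀ x ∈ S, p.IsRoot x)
    (hdeg : p.natDegree ≤ S.card) {z : R} (hz : p.IsRoot z) : z ∈ S := by
  have hsub : S ⊆ p.roots.toFinset := fun x hx ↦ by simpa [hp] using hS x hx
  have hcard : p.roots.toFinset.card ≤ S.card :=
    (Multiset.toFinset_card_le _).trans ((card_roots' p).trans hdeg)
  rw [Finset.eq_of_subset_of_card_le hsub hcard]
  simpa [hp] using hz

theorem descPochhammer_succ_eval_left {R : Type*} [CommRing R] (n : ℕ) (x : R) :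
    (descPochhammer R (n + 1)).eval x = x * (descPochhammer R n).eval (x - 1) := by
  rw [descPochhammer_succ_left, eval_mul, eval_X, eval_comp, eval_sub, eval_X, eval_one]

section PowDerivPoly

variable (a s : ℝ)

noncomputable def powDerivCoeff (j k : ℕ) : ℝ :=
  j.choose k * (descPochhammer ℝ (j - k)).eval a * (descPochhammer ℝ k).eval (a + s - j + k)

noncomputable def powDerivPoly (j : ℕ) : ℝ[X] :=
  ∑ k ∈ Finset.range (j + 1), C (powDerivCoeff a s j k) * X ^ k

variable {a s}

theorem powDerivCoeff_of_lt {j k : ℕ} (h : j < k) : powDerivCoeff a s j k = 0 := by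
  simp [powDerivCoeff, Nat.choose_eq_zero_of_lt h]

theorem powDerivCoeff_succ_zero (j : ℕ) :
    powDerivCoeff a s (j + 1) 0 = (a - j) * powDerivCoeff a s j 0 := by
  simp only [powDerivCoeff, Nat.choose_zero_right, Nat.sub_zero, descPochhammer_succ_eval,
    descPochhammer_zero, eval_one]
  ring

theorem powDerivCoeff_succ_succ (j k : ℕ) :
    powDerivCoeff a s (j + 1) (k + 1) =
      (a - j + (k + 1)) * powDerivCoeff a s j (k + 1) +
        (a + s - 2 * j + k) * powDerivCoeff a s j k := by
  rcases lt_trichotomy k j with hkj | rfl | hjk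
  · obtain ⟨t, rfl⟩ := Nat.exists_eq_add_of_lt hkj
    have hchoose : ((k + t + 1 + 1).choose (k + 1) : ℝ) =
        (k + t + 1).choose k + (k + t + 1).choose (k + 1) := by
      exact_mod_cast Nat.choose_succ_succ' (k + t + 1) k
    have hsucc : ((k + t + 1 : ℕ) + 1 : ℝ) * (k + t + 1).choose k =
        (k + t + 1 + 1).choose (k + 1) * (k + 1) := by
      exact_mod_cast Nat.add_one_mul_choose_eq (k + t + 1) k
    rw [powDerivCoeff, powDerivCoeff, powDerivCoeff, show k + t + 1 + 1 - (k + 1) = t + 1 by omega,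
      show k + t + 1 - (k + 1) = t by omega, show k + t + 1 - k = t + 1 by omega]
    push_cast at hchoose hsucc ⊢
    rw [show a + s - (k + t + 1 + 1) + (k + 1) = a + s - t - 1 by ring,
      show a + s - (k + t + 1) + (k + 1) = a + s - t - 1 + 1 by ring,
      show a + s - (k + t + 1) + k = a + s - t - 1 by ring,
      descPochhammer_succ_eval, descPochhammer_succ_eval, descPochhammer_succ_eval_left,
      add_sub_cancel_right]
    set F := (descPochhammer ℝ t).eval a
    set W := (descPochhammer ℝ k).eval (a + s - t - 1)
    linear_combination F * (a - t) * W * ((a + s - t) * hchoose + hsucc)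
  · simp only [powDerivCoeff, Nat.sub_self, Nat.choose_self, Nat.choose_succ_self,
      descPochhammer_zero, eval_one, descPochhammer_succ_eval]
    push_cast
    rw [sub_add_cancel, sub_add_cancel]
    ring
  · simp only [powDerivCoeff_of_lt hjk, powDerivCoeff_of_lt (Nat.lt_succ_of_lt hjk),
      powDerivCoeff_of_lt (Nat.succ_lt_succ hjk)]
    ring

theorem coeff_powDerivPoly (j k : ℕ) : (powDerivPoly a s j).coeff k = powDerivCoeff a s j k := by
  rw [powDerivPoly, finsetSum_coeff]
  simp only [coeff_C_mul_X_pow]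
  rw [Finset.sum_ite_eq]
  split_ifs with hk
  · rfl
  · exact (powDerivCoeff_of_lt (by simpa using hk)).symm

theorem natDegree_powDerivPoly_le (j : ℕ) : (powDerivPoly a s j).natDegree ≤ j :=
  natDegree_sum_le_of_forall_le _ _ fun k hk ↦
    (natDegree_C_mul_X_pow_le _ k).trans (Finset.mem_range_succ_iff.mp hk)

theorem powDerivPoly_succ (j : ℕ) :
    powDerivPoly a s (j + 1) = X * (1 + X) * derivative (powDerivPoly a s j) +
      (C (a - j) * (1 + X) + C (s - j) * X) * powDerivPoly a s j := by
  ext (_ | k)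
  · simp [coeff_powDerivPoly, powDerivCoeff_succ_zero]
  have h := powDerivCoeff_succ_succ (a := a) (s := s) j k
  rcases k with _ | k <;>
  · simp only [mul_add, add_mul, mul_one, mul_assoc, coeff_add, coeff_X_mul, coeff_C_mul,
      coeff_derivative, coeff_powDerivPoly, mul_coeff_zero, coeff_X_zero, zero_mul]
    push_cast at h ⊢
    linear_combination h

end PowDerivPoly

section PowDerivFun

noncomputable def powDerivFun (a : ℕ) (s : ℝ) (j : ℕ) (x : ℝ) : ℝ :=
  x ^ (a - j) * (1 + x) ^ (s - j) * (powDerivPoly a s j).eval x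

variable {a : ℕ} {s : ℝ} {j : ℕ}

theorem hasDerivAt_powDerivFun (hj : j < a) {x : ℝ} (hx : -1 < x) :
    HasDerivAt (powDerivFun a s j) (powDerivFun a s (j + 1) x) x := by
  have h1x : 0 < 1 + x := by linarith
  have hpow : HasDerivAt (fun y : ℝ ↦ y ^ (a - j)) ((a - j : ℕ) * x ^ (a - j - 1)) x :=
    hasDerivAt_pow _ x
  have hrpow : HasDerivAt (fun y : ℝ ↦ (1 + y) ^ (s - j))
      (1 * (s - j) * (1 + x) ^ (s - j - 1)) x :=
    ((hasDerivAt_id x).const_add 1).rpow_const (Or.inl h1x.ne')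
  refine ((hpow.mul hrpow).mul ((powDerivPoly a s j).hasDerivAt x)).congr_deriv ?_
  obtain ⟨i, hi⟩ : ∃ i, a - j = i + 1 := ⟨a - j - 1, by omega⟩
  have hai : (a : ℝ) = i + 1 + j := by exact_mod_cast (by omega : a = i + 1 + j)
  have hrp : (1 + x) ^ (s - j) = (1 + x) ^ (s - (j + 1 : ℕ)) * (1 + x) := by
    rw [← Real.rpow_add_one h1x.ne']; push_cast; ring_nf
  rw [powDerivFun, powDerivPoly_succ, show a - (j + 1) = i by omega, hi, hrp,
    show s - j - 1 = s - (j + 1 : ℕ) by push_cast; ring]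
  simp only [eval_add, eval_mul, eval_C, eval_X, eval_one, Nat.add_sub_cancel, Pi.mul_apply,
    pow_succ, hrp]
  set R := (1 + x) ^ (s - (j + 1 : ℕ))
  set q := (powDerivPoly a s j).eval x
  push_cast
  linear_combination -(x ^ i * R * (1 + x) * q) * hai

theorem tendsto_powDerivFun_zero (hj : j < a) : Tendsto (powDerivFun a s j) (𝓝 0) (𝓝 0) := by
  have hc : ContinuousAt (powDerivFun a s j) 0 := by
    unfold powDerivFun
    fun_prop (disch := norm_num)
  simpa [powDerivFun, zero_pow (Nat.sub_ne_zero_of_lt hj)] using hc.tendsto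

theorem tendsto_powDerivFun_atTop (hj : j ≤ a) (hs : a + s < 0) :
    Tendsto (powDerivFun a s j) atTop (𝓝 0) := by
  have hs' : s - j ≤ 0 := by
    linarith [(Nat.cast_nonneg a : (0 : ℝ) ≤ a), (Nat.cast_nonneg j : (0 : ℝ) ≤ j)]
  have hprefactor : (fun x : ℝ ↦ x ^ (a - j) * (1 + x) ^ (s - j)) =O[atTop]
      fun x ↦ x ^ (a - j) * x ^ (s - j) := by
    refine IsBigO.of_bound 1 ?_
    filter_upwards [eventually_gt_atTop 0] with x hx
    rw [one_mul, Real.norm_of_nonneg (by positivity), Real.norm_of_nonneg (by positivity)]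
    exact mul_le_mul_of_nonneg_left (Real.rpow_le_rpow_of_nonpos hx (by linarith) hs')
      (by positivity)
  have hpoly : (fun x ↦ (powDerivPoly a s j).eval x) =O[atTop] fun x ↦ x ^ j := by
    simpa using isBigO_atTop_of_degree_le (powDerivPoly a s j) (X ^ j)
      ((degree_le_of_natDegree_le (natDegree_powDerivPoly_le j)).trans_eq (degree_X_pow j).symm)
  have hbound : Tendsto (fun x : ℝ ↦ x ^ (a - j) * x ^ (s - j) * x ^ j) atTop (𝓝 0) := by
    have h := tendsto_rpow_neg_atTop (y := -(a + s - j)) (by linarith)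
    rw [neg_neg] at h
    refine h.congr' ?_
    filter_upwards [eventually_gt_atTop 0] with x hx
    rw [← Real.rpow_natCast, ← Real.rpow_natCast, ← Real.rpow_add hx, ← Real.rpow_add hx,
      Nat.cast_sub hj]
    ring_nf
  exact (hprefactor.mul hpoly).trans_tendsto hbound

theorem powDerivFun_eq_zero_iff {x : ℝ} (hx : 0 < x) :
    powDerivFun a s j x = 0 ↔ (powDerivPoly a s j).IsRoot x := by
  simp [powDerivFun, hx.ne', (Real.rpow_pos_of_pos (by linarith : 0 < 1 + x) _).ne']

end PowDerivFun

theorem exists_card_pos_roots_powDerivPoly {a : ℕ} {s : ℝ} (hs : a + s < 0) {j : ℕ}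
    (hj : j ≤ a) : ∃ S : Finset ℝ, S.card = j ∧ ∀ x ∈ S, 0 < x ∧ (powDerivPoly a s j).IsRoot x := by
  induction j with
  | zero => exact ⟨∅, rfl, by simp⟩
  | succ j ih =>
    obtain ⟨S, hS, hroots⟩ := ih (by omega)
    have hzeros : ∀ x ∈ S, 0 < x ∧ powDerivFun a s j x = 0 := fun x hx ↦
      ⟨(hroots x hx).1, (powDerivFun_eq_zero_iff (hroots x hx).1).mpr (hroots x hx).2⟩
    obtain ⟨T, hT, hTzeros⟩ := exists_card_zeros_deriv_Ioi (u := 0)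
      (fun x hx ↦ hasDerivAt_powDerivFun hj (by linarith [mem_Ioi.mp hx]))
      ((tendsto_powDerivFun_zero hj).mono_left nhdsWithin_le_nhds)
      (tendsto_powDerivFun_atTop (by omega) hs) hzeros
    refine ⟨T, hS ▸ hT, fun x hx ↦ ?_⟩
    obtain ⟨hx0, hx⟩ := hTzeros x hx
    exact ⟨hx0, (powDerivFun_eq_zero_iff hx0).mp hx⟩

/-- Each step of the induction uses `-4 (-t - 1/2 - e - k) (t + k + 1) =
(2 (t + k) + e + 2) (2 (t + k) + e + 1)`, which holds exactly when `e ∈ {0, 1}`. -/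
theorem neg_four_pow_mul_descPochhammer_eval_half (t e : ℕ) (he : e ≤ 1) (k : ℕ) :
    (-4 : ℝ) ^ k * (descPochhammer ℝ k).eval (-(t : ℝ) - 1 / 2 - e) * (t + k)! *
      (2 * t + e)! = (2 * (t + k) + e)! * t ! := by
  induction k with
  | zero => simp [mul_comm]
  | succ k ih =>
    have he2 : (e : ℝ) * e = e := by interval_cases e <;> norm_num
    rw [descPochhammer_succ_eval, show 2 * (t + (k + 1)) + e = 2 * (t + k) + e + 1 + 1 by ring,
      ← add_assoc, Nat.factorial_succ (t + k), Nat.factorial_succ (_ + 1),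
      Nat.factorial_succ (2 * (t + k) + e)]
    push_cast
    linear_combination (-4 * (t + k + 1) * (-(t : ℝ) - 1 / 2 - e - k)) * ih
      - ((2 * (t + k) + e)! * t ! : ℝ) * he2

theorem powDerivCoeff_eq_superCatalan (p m e k : ℕ) (he : e ≤ 1) (hk : k ≤ m) :
    powDerivCoeff ((p + m : ℕ) : ℝ) (-((p + m : ℕ) : ℝ) - 1 / 2 - e) m k =
      2 * (p + m)! / ((2 * p).choose p * p !) *
        ((superCatalan p k / 2 : ℚ) * (2 * m + e).choose (2 * k)) * (-1 / 4) ^ k := by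
  obtain ⟨t, rfl⟩ := Nat.exists_eq_add_of_le' hk
  have hD := neg_four_pow_mul_descPochhammer_eval_half t e he k
  have harg : ((p + (t + k) : ℕ) : ℝ) + (-((p + (t + k) : ℕ) : ℝ) - 1 / 2 - e) - (t + k : ℕ) +
      k = -(t : ℝ) - 1 / 2 - e := by push_cast; ring
  have hdesc : ((p + (t + k)).descFactorial t : ℝ) * (p + k)! = (p + (t + k))! := by
    have := Nat.factorial_mul_descFactorial (show t ≤ p + (t + k) by omega)
    rw [show p + (t + k) - t = p + k by omega] at this
    exact_mod_cast (mul_comm _ _).trans this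
  rw [powDerivCoeff, show t + k - k = t by omega, harg, descPochhammer_eval_eq_descFactorial,
    superCatalan]
  push_cast
  rw [Nat.cast_choose ℝ (show k ≤ t + k by omega), Nat.cast_choose ℝ (show p ≤ 2 * p by omega),
    Nat.cast_choose ℝ (show 2 * k ≤ 2 * (t + k) + e by omega),
    Nat.cast_choose ℝ (show k ≤ 2 * k by omega),
    Nat.cast_choose ℝ (show p ≤ p + k by omega),
    show t + k - k = t by omega, show 2 * p - p = p by omega, show 2 * k - k = k by omega,
    show p + k - p = k by omega, show 2 * (t + k) + e - 2 * k = 2 * t + e by omega]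
  set D := (descPochhammer ℝ k).eval (-(t : ℝ) - 1 / 2 - e)
  have h4 : (-1 / 4 : ℝ) ^ k * (-4) ^ k = 1 := by rw [← mul_pow]; norm_num
  field_simp
  linear_combination ((t + k)! * D * (2 * t + e)! : ℝ) * hdesc
    + ((p + (t + k))! * (-1 / 4) ^ k : ℝ) * hD
    - (D * (p + (t + k))! * (t + k)! * (2 * t + e)! : ℝ) * h4

/-- The paper's `Q_n^p`. -/
noncomputable def superCatalanPoly (n p : ℕ) : ℝ[X] :=
  ∑ k ∈ Finset.range (n / 2 + 1),
    C ((superCatalan p k / 2 : ℚ) * n.choose (2 * k) : ℝ) * X ^ k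

theorem natDegree_superCatalanPoly_le (n p : ℕ) : (superCatalanPoly n p).natDegree ≤ n / 2 :=
  natDegree_sum_le_of_forall_le _ _ fun k hk ↦
    (natDegree_C_mul_X_pow_le _ k).trans (Finset.mem_range_succ_iff.mp hk)

theorem superCatalanPoly_ne_zero (n p : ℕ) : superCatalanPoly n p ≠ 0 := fun h ↦ by
  simpa [superCatalanPoly, finsetSum_coeff, superCatalan,
    (Nat.choose_pos (by omega : p ≤ 2 * p)).ne'] using congrArg (coeff · 0) h

theorem eval_powDerivPoly_eq_superCatalanPoly (n p : ℕ) (x : ℝ) :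
    (powDerivPoly (p + n / 2 : ℕ) (-((p + n / 2 : ℕ) : ℝ) - 1 / 2 - (n % 2 : ℕ)) (n / 2)).eval x =
      2 * (p + n / 2)! / ((2 * p).choose p * p !) * (superCatalanPoly n p).eval (-x / 4) := by
  rw [powDerivPoly, superCatalanPoly, eval_finsetSum, eval_finsetSum, Finset.mul_sum]
  refine Finset.sum_congr rfl fun k hk ↦ ?_
  rw [eval_C_mul, eval_C_mul, eval_pow, eval_pow, eval_X, eval_X,
    powDerivCoeff_eq_superCatalan p (n / 2) (n % 2) k (by omega) (Finset.mem_range_succ_iff.mp hk),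
    show 2 * (n / 2) + n % 2 = n by omega]
  ring

theorem exists_card_neg_roots_superCatalanPoly (n p : ℕ) :
    ∃ S : Finset ℝ, S.card = n / 2 ∧
      ∀ y ∈ S, y < 0 ∧ (superCatalanPoly n p).IsRoot y := by
  have hs : ((p + n / 2 : ℕ) : ℝ) + (-((p + n / 2 : ℕ) : ℝ) - 1 / 2 - (n % 2 : ℕ)) < 0 := by
    linarith [(Nat.cast_nonneg (n % 2) : (0 : ℝ) ≤ (n % 2 : ℕ))]
  obtain ⟨T, hT, hroots⟩ := exists_card_pos_roots_powDerivPoly hs (j := n / 2) (by omega)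
  refine ⟨T.image (fun x ↦ -x / 4), ?_, ?_⟩
  · rw [Finset.card_image_of_injective _ fun x y h ↦ by simpa using h, hT]
  · simp only [Finset.mem_image, forall_exists_index, and_imp]
    rintro _ x hx rfl
    obtain ⟨hx0, hroot⟩ := hroots x hx
    refine ⟨by linarith, ?_⟩
    rw [IsRoot, eval_powDerivPoly_eq_superCatalanPoly] at hroot
    have : (0 : ℝ) < (2 * p).choose p := by exact_mod_cast Nat.choose_pos (by omega)
    exact (mul_eq_zero.mp hroot).resolve_left (by positivity)

theorem Qnp_real_negative_zeros_general (n p : ℕ) :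
    ∀ z : ℂ,
      (∑ k ∈ Finset.range (n / 2 + 1),
          ((superCatalan p k / 2 : ℚ) : ℂ) * ((n.choose (2 * k) : ℂ)) * z ^ k) = 0 →
      ∃ x : ℝ, x < 0 ∧ z = (x : ℂ) := by
  intro z hz
  obtain ⟨S, hS, hneg⟩ := exists_card_neg_roots_superCatalanPoly n p
  set Q := (superCatalanPoly n p).map Complex.ofRealHom
  have hQz : Q.IsRoot z := by
    simpa [Q, superCatalanPoly, eval_finsetSum, Polynomial.map_sum] using hz
  have hmem := Polynomial.mem_of_isRoot_of_natDegree_le_card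
    (S := S.map ⟨((↑) : ℝ → ℂ), Complex.ofReal_injective⟩)
    (Polynomial.map_ne_zero (superCatalanPoly_ne_zero n p))
    (by simpa using fun x hx ↦ (hneg x hx).2.map (f := Complex.ofRealHom))
    (natDegree_map_le.trans (by simpa [hS] using natDegree_superCatalanPoly_le n p)) hQz
  obtain ⟨x, hx, rfl⟩ := Finset.mem_map.mp hmem
  exact ⟨x, (hneg x hx).1, rfl⟩

/-- All zeros of `Q_n^p(z) = ∑_{k=0}^{⌊n/2⌋} (S(p,k)/2) C(n,2k) z^k` are real and negative. -/
theorem Qnp_real_negative_zeros (n p : ℕ) (hn : 0 < n) (hp : 0 < p) :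
    ∀ z : ℂ,
      (∑ k ∈ Finset.range (n / 2 + 1),
          ((superCatalan p k / 2 : ℚ) : ℂ) * ((n.choose (2 * k) : ℂ)) * z ^ k) = 0 →
      ∃ x : ℝ, x < 0 ∧ z = (x : ℂ) :=
  Qnp_real_negative_zeros_general n p
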